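/- Fixed-budget variance bound for local Pauli observables: with the quasiprobability sampling setup and unbiased snapshot maps described in the context, let q ∈ ℕ and assume that for every multi-index l: Σ_{ω∈Ω_l} μ_l(ω) (Tr(O ρ̂_l(ω)))² ≤ 3^q and |Tr(O Φ_l(ρ))| ≤ 1. Then for any M, N_s ≥ 1, writing N_total := M·N_s, the variance of the overall estimator ⟨Ô⟩ := (1/(M·N_s)) Σ_{m=1}^{M} Σ_{s=1}^{N_s} Γ_{l_m} · Tr(O ρ̂_{l_m}(ω_{m,s})) (over the product distribution in which l_1,…,l_M are i.i.d. with probability p(l) and, given l_m, the ω_{m,s} are i.i.d. from μ_{l_m}) satisfies Var[⟨Ô⟩] ≤ (Γ²/N_total) · (3^q − 1 + N_s). -/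

import Mathlib

open Matrix
open scoped BigOperators

/-- Sequential composition `Φ_{K} ∘ ⋯ ∘ Φ_{1}` of a finite family of linear maps on
`n × n` complex matrices (the map with index `0` is applied first). -/
noncomputable def compSeq {n K : ℕ}
    (f : Fin K → (Matrix (Fin n) (Fin n) ℂ →ₗ[ℂ] Matrix (Fin n) (Fin n) ℂ)) :
    Matrix (Fin n) (Fin n) ℂ →ₗ[ℂ] Matrix (Fin n) (Fin n) ℂ :=
  (List.ofFn f).foldl (fun acc g => g ∘ₗ acc) LinearMap.id

lemma sum_pi_prod {ι : Type*} [Fintype ι] [DecidableEq ι] {T : ι → Type*} [∀ i, Fintype (T i)]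
    (h : ∀ i, T i → ℝ) :
    ∑ v : (∀ i, T i), ∏ i, h i (v i) = ∏ i, ∑ t, h i t := by
  rw [Finset.prod_univ_sum, Fintype.piFinset_univ]


lemma block_one {Ωl : Type*} [Fintype Ωl] {Ns : ℕ} (μl : Ωl → ℝ) (hμ1 : ∑ ω, μl ω = 1) :
    ∑ v : Fin Ns → Ωl, ∏ s, μl (v s) = 1 := by
  rw [sum_pi_prod (h := fun _ ω => μl ω)]; simp [hμ1]


lemma block_single {Ωl : Type*} [Fintype Ωl] {Ns : ℕ} (μl : Ωl → ℝ) (hμ1 : ∑ ω, μl ω = 1)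
    (s0 : Fin Ns) (Fl : Ωl → ℝ) :
    ∑ v : Fin Ns → Ωl, (∏ s, μl (v s)) * Fl (v s0) = ∑ ω, μl ω * Fl ω := by
  have h1 : ∀ v : Fin Ns → Ωl,
      (∏ s, μl (v s)) * Fl (v s0) = ∏ s, (μl (v s) * (if s = s0 then Fl (v s) else 1)) := by
    intro v
    rw [Finset.prod_mul_distrib, Finset.prod_ite_eq']
    simp
  rw [Finset.sum_congr rfl fun v _ => h1 v,
    sum_pi_prod (h := fun s ω => μl ω * (if s = s0 then Fl ω else 1))]
  have h2 : ∀ s : Fin Ns, (∑ ω, μl ω * (if s = s0 then Fl ω else 1))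
      = if s = s0 then (∑ ω, μl ω * Fl ω) else 1 := by
    intro s; by_cases h : s = s0 <;> simp [h, hμ1]
  rw [Finset.prod_congr rfl fun s _ => h2 s, Finset.prod_ite_eq']
  simp

-- per-block first-moment computation

lemma block_pair {Ωl : Type*} [Fintype Ωl] {Ns : ℕ} (μl : Ωl → ℝ) (hμ1 : ∑ ω, μl ω = 1) (s s' : Fin Ns) (Fl : Ωl → ℝ) :
    ∑ v : Fin Ns → Ωl, (∏ t, μl (v t)) * (Fl (v s) * Fl (v s')) =
      if s' = s then ∑ ω, μl ω * (Fl ω) ^ 2 else (∑ ω, μl ω * Fl ω) ^ 2 := by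
  by_cases hss : s' = s
  · subst hss
    simp only [if_pos rfl]
    have h1 : ∀ v : Fin Ns → Ωl,
        (∏ t, μl (v t)) * (Fl (v s') * Fl (v s')) =
          ∏ t, (μl (v t) * (if t = s' then (Fl (v t)) ^ 2 else 1)) := by
      intro v
      rw [Finset.prod_mul_distrib, Finset.prod_ite_eq', if_pos (Finset.mem_univ s')]
      ring
    rw [Finset.sum_congr rfl fun v _ => h1 v,
      sum_pi_prod (h := fun t ω => μl ω * (if t = s' then (Fl ω) ^ 2 else 1))]
    have h2 : ∀ t : Fin Ns, (∑ ω, μl ω * (if t = s' then (Fl ω) ^ 2 else 1))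
        = if t = s' then (∑ ω, μl ω * (Fl ω) ^ 2) else 1 := by
      intro t; by_cases h : t = s' <;> simp [h, hμ1]
    rw [Finset.prod_congr rfl fun t _ => h2 t, Finset.prod_ite_eq']
    simp
  · simp only [if_neg hss]
    have h1 : ∀ v : Fin Ns → Ωl,
        (∏ t, μl (v t)) * (Fl (v s) * Fl (v s')) =
          ∏ t, (μl (v t) * ((if t = s then Fl (v t) else 1) * (if t = s' then Fl (v t) else 1))) := by
      intro v
      rw [Finset.prod_mul_distrib, Finset.prod_mul_distrib, Finset.prod_ite_eq',
        Finset.prod_ite_eq']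
      simp
    rw [Finset.sum_congr rfl fun v _ => h1 v,
      sum_pi_prod (h := fun t ω => μl ω * ((if t = s then Fl ω else 1) * (if t = s' then Fl ω else 1)))]
    have h2 : ∀ t : Fin Ns, (∑ ω, μl ω * ((if t = s then Fl ω else 1) * (if t = s' then Fl ω else 1)))
        = (if t = s then (∑ ω, μl ω * Fl ω) else 1) * (if t = s' then (∑ ω, μl ω * Fl ω) else 1) := by
      intro t
      by_cases h : t = s
      · have h' : t ≠ s' := fun hh => hss (h ▸ hh.symm ▸ rfl)
        simp only [if_pos h, if_neg h', mul_one, one_mul]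
      · by_cases h' : t = s'
        · simp only [if_pos h', if_neg h, mul_one, one_mul]
        · simp only [if_neg h, if_neg h', mul_one, one_mul, hμ1]
    rw [Finset.prod_congr rfl fun t _ => h2 t, Finset.prod_mul_distrib,
      Finset.prod_ite_eq', Finset.prod_ite_eq']
    simp [sq]

lemma blockB1 {Ωl : Type*} [Fintype Ωl] {Ns : ℕ} (μl : Ωl → ℝ) (hμ1 : ∑ ω, μl ω = 1)
    (Fl : Ωl → ℝ) :
    ∑ v : Fin Ns → Ωl, (∏ s, μl (v s)) * (∑ s, Fl (v s)) = (Ns : ℝ) * ∑ ω, μl ω * Fl ω := by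
  have h1 : ∀ v : Fin Ns → Ωl, (∏ s, μl (v s)) * (∑ s, Fl (v s))
      = ∑ s, (∏ t, μl (v t)) * Fl (v s) := fun v => Finset.mul_sum _ _ _
  rw [Finset.sum_congr rfl fun v _ => h1 v, Finset.sum_comm,
    Finset.sum_congr rfl fun s _ => block_single μl hμ1 s Fl]
  simp [Finset.sum_const, mul_comm]


lemma sum_ite_diag {ι : Type*} [Fintype ι] [DecidableEq ι] (x y : ℝ) (i : ι) :
    ∑ j, (if j = i then x else y) = x + ((Fintype.card ι : ℝ) - 1) * y := by
  have h : ∀ j : ι, (if j = i then x else y) = y + (if j = i then x - y else 0) := by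
    intro j; split <;> ring
  rw [Finset.sum_congr rfl fun j _ => h j, Finset.sum_add_distrib, Finset.sum_ite_eq']
  simp [Finset.card_univ]
  ring


lemma blockB2 {Ωl : Type*} [Fintype Ωl] {Ns : ℕ} (μl : Ωl → ℝ) (hμ1 : ∑ ω, μl ω = 1)
    (Fl : Ωl → ℝ) :
    ∑ v : Fin Ns → Ωl, (∏ s, μl (v s)) * ((∑ s, Fl (v s)) * (∑ s, Fl (v s)))
      = (Ns : ℝ) * (∑ ω, μl ω * (Fl ω) ^ 2)
        + ((Ns : ℝ) ^ 2 - (Ns : ℝ)) * (∑ ω, μl ω * Fl ω) ^ 2 := by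
  have h1 : ∀ v : Fin Ns → Ωl, (∏ s, μl (v s)) * ((∑ s, Fl (v s)) * (∑ s, Fl (v s)))
      = ∑ s, ∑ s', (∏ t, μl (v t)) * (Fl (v s) * Fl (v s')) := by
    intro v
    rw [Finset.sum_mul_sum]
    simp only [Finset.mul_sum]
  rw [Finset.sum_congr rfl fun v _ => h1 v, Finset.sum_comm]
  have h2 : ∀ s : Fin Ns, (∑ v : Fin Ns → Ωl, ∑ s', (∏ t, μl (v t)) * (Fl (v s) * Fl (v s')))
      = ∑ s', ∑ v : Fin Ns → Ωl, (∏ t, μl (v t)) * (Fl (v s) * Fl (v s')) :=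
    fun s => Finset.sum_comm
  rw [Finset.sum_congr rfl fun s _ => h2 s]
  have h3 : ∀ s s' : Fin Ns, (∑ v : Fin Ns → Ωl, (∏ t, μl (v t)) * (Fl (v s) * Fl (v s')))
      = if s' = s then ∑ ω, μl ω * (Fl ω) ^ 2 else (∑ ω, μl ω * Fl ω) ^ 2 :=
    fun s s' => block_pair μl hμ1 s s' Fl
  rw [Finset.sum_congr rfl fun s _ => Finset.sum_congr rfl fun s' _ => h3 s s',
    Finset.sum_congr rfl fun s _ => sum_ite_diag _ _ s]
  simp [Finset.sum_const, Finset.card_univ]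
  ring


lemma master {A : Type*} [Fintype A] [DecidableEq A] {Ω : A → Type*} [∀ l, Fintype (Ω l)]
    (p : A → ℝ) (μ : ∀ l, Ω l → ℝ) {M Ns : ℕ}
    (H : Fin M → (l : A) → (Fin Ns → Ω l) → ℝ) :
    ∑ L : Fin M → A, ∑ w : (m : Fin M) → Fin Ns → Ω (L m),
      ((∏ m, p (L m)) * (∏ m, ∏ s, μ (L m) (w m s))) * ∏ m, H m (L m) (w m)
    = ∏ m, ∑ l, p l * ∑ v : Fin Ns → Ω l, (∏ s, μ l (v s)) * H m l v := by
  have h1 : ∀ L : Fin M → A,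
      (∑ w : (m : Fin M) → Fin Ns → Ω (L m),
        ((∏ m, p (L m)) * (∏ m, ∏ s, μ (L m) (w m s))) * ∏ m, H m (L m) (w m))
      = ∏ m, (p (L m) * ∑ v : Fin Ns → Ω (L m), (∏ s, μ (L m) (v s)) * H m (L m) v) := by
    intro L
    have e1 : ∀ w : (m : Fin M) → Fin Ns → Ω (L m),
        ((∏ m, p (L m)) * (∏ m, ∏ s, μ (L m) (w m s))) * ∏ m, H m (L m) (w m)
        = ∏ m, (p (L m) * ((∏ s, μ (L m) (w m s)) * H m (L m) (w m))) := by
      intro w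
      rw [Finset.prod_mul_distrib, Finset.prod_mul_distrib]
      ring
    rw [Finset.sum_congr rfl fun w _ => e1 w,
      sum_pi_prod (T := fun m => Fin Ns → Ω (L m))
        (h := fun m v => p (L m) * ((∏ s, μ (L m) (v s)) * H m (L m) v))]
    exact Finset.prod_congr rfl fun m _ => by rw [← Finset.mul_sum]
  rw [Finset.sum_congr rfl fun L _ => h1 L,
    sum_pi_prod (T := fun _ => A)
      (h := fun m l => p l * ∑ v : Fin Ns → Ω l, (∏ s, μ l (v s)) * H m l v)]


section Var
variable {A : Type*} [Fintype A] [DecidableEq A] {Ω : A → Type*} [∀ l, Fintype (Ω l)]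

lemma first_moment (p : A → ℝ) (hp1 : ∑ l, p l = 1)
    (μ : ∀ l, Ω l → ℝ) (hμ1 : ∀ l, ∑ ω, μ l ω = 1)
    (F : ∀ l : A, Ω l → ℝ) (M Ns : ℕ) :
    ∑ L : Fin M → A, ∑ w : (m : Fin M) → Fin Ns → Ω (L m),
      ((∏ m, p (L m)) * (∏ m, ∏ s, μ (L m) (w m s))) * (∑ m, ∑ s, F (L m) (w m s))
    = (M : ℝ) * ((Ns : ℝ) * ∑ l, p l * ∑ ω, μ l ω * F l ω) := by
  have hstep : ∀ (L : Fin M → A) (w : (m : Fin M) → Fin Ns → Ω (L m)),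
      ((∏ m, p (L m)) * (∏ m, ∏ s, μ (L m) (w m s))) * (∑ m, ∑ s, F (L m) (w m s))
      = ∑ m0, ((∏ m, p (L m)) * (∏ m, ∏ s, μ (L m) (w m s))) *
          ∏ m, (if m = m0 then (∑ s, F (L m) (w m s)) else 1) := by
    intro L w
    rw [← Finset.mul_sum]
    congr 1
    refine Finset.sum_congr rfl fun m0 _ => ?_
    rw [Finset.prod_ite_eq']
    simp
  rw [Finset.sum_congr rfl fun L _ => Finset.sum_congr rfl fun w _ => hstep L w,
    Finset.sum_congr rfl fun L _ => Finset.sum_comm, Finset.sum_comm]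
  have hm0 : ∀ m0 : Fin M,
      (∑ L : Fin M → A, ∑ w : (m : Fin M) → Fin Ns → Ω (L m),
        ((∏ m, p (L m)) * (∏ m, ∏ s, μ (L m) (w m s))) *
          ∏ m, (if m = m0 then (∑ s, F (L m) (w m s)) else 1))
      = (Ns : ℝ) * ∑ l, p l * ∑ ω, μ l ω * F l ω := by
    intro m0
    rw [master p μ (fun m l v => if m = m0 then (∑ s, F l (v s)) else 1)]
    have he : ∀ m : Fin M,
        (∑ l, p l * ∑ v : Fin Ns → Ω l, (∏ s, μ l (v s)) *
          (if m = m0 then (∑ s, F l (v s)) else 1))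
        = if m = m0 then ((Ns : ℝ) * ∑ l, p l * ∑ ω, μ l ω * F l ω) else 1 := by
      intro m
      by_cases h : m = m0
      · simp only [if_pos h]
        rw [Finset.sum_congr rfl fun l _ => by rw [blockB1 (μ l) (hμ1 l) (F l)]]
        rw [Finset.mul_sum]
        refine Finset.sum_congr rfl fun l _ => by ring
      · simp only [if_neg h, mul_one]
        rw [Finset.sum_congr rfl fun l _ => by rw [block_one (μ l) (hμ1 l), mul_one]]
        exact hp1
    rw [Finset.prod_congr rfl fun m _ => he m, Finset.prod_ite_eq']
    simp
  rw [Finset.sum_congr rfl fun m0 _ => hm0 m0]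
  simp [Finset.sum_const, Finset.card_univ, mul_comm]

lemma second_moment (p : A → ℝ) (hp1 : ∑ l, p l = 1)
    (μ : ∀ l, Ω l → ℝ) (hμ1 : ∀ l, ∑ ω, μ l ω = 1)
    (F : ∀ l : A, Ω l → ℝ) (M Ns : ℕ) :
    ∑ L : Fin M → A, ∑ w : (m : Fin M) → Fin Ns → Ω (L m),
      ((∏ m, p (L m)) * (∏ m, ∏ s, μ (L m) (w m s))) * (∑ m, ∑ s, F (L m) (w m s)) ^ 2
    = (M : ℝ) * (∑ l, p l * ((Ns : ℝ) * (∑ ω, μ l ω * (F l ω) ^ 2)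
          + ((Ns : ℝ) ^ 2 - (Ns : ℝ)) * (∑ ω, μ l ω * F l ω) ^ 2))
      + ((M : ℝ) ^ 2 - (M : ℝ)) *
          ((Ns : ℝ) * ∑ l, p l * ∑ ω, μ l ω * F l ω) ^ 2 := by
  set eB : ℝ := (Ns : ℝ) * ∑ l, p l * ∑ ω, μ l ω * F l ω with heB
  set eB2 : ℝ := ∑ l, p l * ((Ns : ℝ) * (∑ ω, μ l ω * (F l ω) ^ 2)
      + ((Ns : ℝ) ^ 2 - (Ns : ℝ)) * (∑ ω, μ l ω * F l ω) ^ 2) with heB2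
  have hstep : ∀ (L : Fin M → A) (w : (m : Fin M) → Fin Ns → Ω (L m)),
      ((∏ m, p (L m)) * (∏ m, ∏ s, μ (L m) (w m s))) * (∑ m, ∑ s, F (L m) (w m s)) ^ 2
      = ∑ m0, ∑ m1, ((∏ m, p (L m)) * (∏ m, ∏ s, μ (L m) (w m s))) *
          ∏ m, ((if m = m0 then (∑ s, F (L m) (w m s)) else 1) *
                (if m = m1 then (∑ s, F (L m) (w m s)) else 1)) := by
    intro L w
    have hpr : ∀ m0 m1 : Fin M,
        (∏ m, ((if m = m0 then (∑ s, F (L m) (w m s)) else 1) *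
                (if m = m1 then (∑ s, F (L m) (w m s)) else 1)))
        = (∑ s, F (L m0) (w m0 s)) * (∑ s, F (L m1) (w m1 s)) := by
      intro m0 m1
      rw [Finset.prod_mul_distrib, Finset.prod_ite_eq', Finset.prod_ite_eq']
      simp
    simp only [← Finset.mul_sum]
    rw [Finset.sum_congr rfl fun m0 _ => Finset.sum_congr rfl fun m1 _ => hpr m0 m1]
    rw [← Finset.sum_mul_sum]
    ring
  rw [Finset.sum_congr rfl fun L _ => Finset.sum_congr rfl fun w _ => hstep L w]
  -- move the m0, m1 sums outside
  rw [Finset.sum_congr rfl fun L _ => Finset.sum_comm, Finset.sum_comm]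
  rw [Finset.sum_congr rfl fun m0 _ =>
    (Finset.sum_congr rfl fun L _ => Finset.sum_comm).trans Finset.sum_comm]
  have hpair : ∀ m0 m1 : Fin M,
      (∑ L : Fin M → A, ∑ w : (m : Fin M) → Fin Ns → Ω (L m),
        ((∏ m, p (L m)) * (∏ m, ∏ s, μ (L m) (w m s))) *
          ∏ m, ((if m = m0 then (∑ s, F (L m) (w m s)) else 1) *
                (if m = m1 then (∑ s, F (L m) (w m s)) else 1)))
      = if m1 = m0 then eB2 else eB * eB := by
    intro m0 m1
    rw [master p μ (fun m l v => (if m = m0 then (∑ s, F l (v s)) else 1) *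
        (if m = m1 then (∑ s, F l (v s)) else 1))]
    by_cases h01 : m1 = m0
    · subst h01
      simp only [if_pos rfl]
      have he : ∀ m : Fin M,
          (∑ l, p l * ∑ v : Fin Ns → Ω l, (∏ s, μ l (v s)) *
            ((if m = m1 then (∑ s, F l (v s)) else 1) * (if m = m1 then (∑ s, F l (v s)) else 1)))
          = if m = m1 then eB2 else 1 := by
        intro m
        by_cases h : m = m1
        · simp only [if_pos h]
          rw [Finset.sum_congr rfl fun l _ => by rw [blockB2 (μ l) (hμ1 l) (F l)]]
        · simp only [if_neg h, mul_one]
          rw [Finset.sum_congr rfl fun l _ => by rw [block_one (μ l) (hμ1 l), mul_one]]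
          exact hp1
      rw [Finset.prod_congr rfl fun m _ => he m, Finset.prod_ite_eq']
      simp
    · simp only [if_neg h01]
      have he : ∀ m : Fin M,
          (∑ l, p l * ∑ v : Fin Ns → Ω l, (∏ s, μ l (v s)) *
            ((if m = m0 then (∑ s, F l (v s)) else 1) * (if m = m1 then (∑ s, F l (v s)) else 1)))
          = (if m = m0 then eB else 1) * (if m = m1 then eB else 1) := by
        intro m
        by_cases h : m = m0
        · have h' : ¬ m = m1 := fun hh => h01 (hh ▸ h ▸ rfl)
          simp only [if_pos h, if_neg h', mul_one, one_mul]
          rw [Finset.sum_congr rfl fun l _ => by rw [blockB1 (μ l) (hμ1 l) (F l)], heB,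
            Finset.mul_sum]
          exact Finset.sum_congr rfl fun l _ => by ring
        · by_cases h' : m = m1
          · simp only [if_pos h', if_neg h, mul_one, one_mul]
            rw [Finset.sum_congr rfl fun l _ => by rw [blockB1 (μ l) (hμ1 l) (F l)], heB,
              Finset.mul_sum]
            exact Finset.sum_congr rfl fun l _ => by ring
          · simp only [if_neg h, if_neg h', mul_one]
            rw [Finset.sum_congr rfl fun l _ => by rw [block_one (μ l) (hμ1 l), mul_one]]
            exact hp1
      rw [Finset.prod_congr rfl fun m _ => he m, Finset.prod_mul_distrib,
        Finset.prod_ite_eq', Finset.prod_ite_eq']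
      simp
  rw [Finset.sum_congr rfl fun m0 _ => Finset.sum_congr rfl fun m1 _ => hpair m0 m1]
  rw [Finset.sum_congr rfl fun m0 _ => sum_ite_diag eB2 (eB * eB) m0]
  simp [Finset.sum_const, Finset.card_univ]
  ring

lemma var_le (p : A → ℝ) (hp0 : ∀ l, 0 ≤ p l) (hp1 : ∑ l, p l = 1)
    (μ : ∀ l, Ω l → ℝ) (hμ1 : ∀ l, ∑ ω, μ l ω = 1)
    (F : ∀ l : A, Ω l → ℝ) (M Ns : ℕ) (hM : 1 ≤ M) (hNs : 1 ≤ Ns)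
    (V b : ℝ) (hV0 : 0 ≤ V) (hb0 : 0 ≤ b)
    (hW : ∀ l, ∑ ω, μ l ω * (F l ω) ^ 2 ≤ V)
    (hG : ∀ l, (∑ ω, μ l ω * F l ω) ^ 2 ≤ b) :
    (∑ L : Fin M → A, ∑ w : (m : Fin M) → Fin Ns → Ω (L m),
      ((∏ m, p (L m)) * (∏ m, ∏ s, μ (L m) (w m s))) *
        ((1 / ((M : ℝ) * (Ns : ℝ))) * ∑ m, ∑ s, F (L m) (w m s)) ^ 2)
    - (∑ L : Fin M → A, ∑ w : (m : Fin M) → Fin Ns → Ω (L m),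
      ((∏ m, p (L m)) * (∏ m, ∏ s, μ (L m) (w m s))) *
        ((1 / ((M : ℝ) * (Ns : ℝ))) * ∑ m, ∑ s, F (L m) (w m s))) ^ 2
    ≤ (1 / ((M : ℝ) * (Ns : ℝ))) * (V + ((Ns : ℝ) - 1) * b) := by
  have hMpos : (0 : ℝ) < M := by exact_mod_cast hM
  have hNspos : (0 : ℝ) < Ns := by exact_mod_cast hNs
  set t : ℝ := 1 / ((M : ℝ) * (Ns : ℝ)) with ht
  have h1 := first_moment p hp1 μ hμ1 F M Ns
  have h2 := second_moment p hp1 μ hμ1 F M Ns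
  have e2 : (∑ L : Fin M → A, ∑ w : (m : Fin M) → Fin Ns → Ω (L m),
      ((∏ m, p (L m)) * (∏ m, ∏ s, μ (L m) (w m s))) *
        (t * ∑ m, ∑ s, F (L m) (w m s)) ^ 2)
      = t ^ 2 * (∑ L : Fin M → A, ∑ w : (m : Fin M) → Fin Ns → Ω (L m),
        ((∏ m, p (L m)) * (∏ m, ∏ s, μ (L m) (w m s))) * (∑ m, ∑ s, F (L m) (w m s)) ^ 2) := by
    rw [Finset.mul_sum]
    refine Finset.sum_congr rfl fun L _ => ?_
    rw [Finset.mul_sum]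
    exact Finset.sum_congr rfl fun w _ => by ring
  have e1 : (∑ L : Fin M → A, ∑ w : (m : Fin M) → Fin Ns → Ω (L m),
      ((∏ m, p (L m)) * (∏ m, ∏ s, μ (L m) (w m s))) *
        (t * ∑ m, ∑ s, F (L m) (w m s)))
      = t * (∑ L : Fin M → A, ∑ w : (m : Fin M) → Fin Ns → Ω (L m),
        ((∏ m, p (L m)) * (∏ m, ∏ s, μ (L m) (w m s))) * (∑ m, ∑ s, F (L m) (w m s))) := by
    rw [Finset.mul_sum]
    refine Finset.sum_congr rfl fun L _ => ?_
    rw [Finset.mul_sum]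
    exact Finset.sum_congr rfl fun w _ => by ring
  rw [e2, e1, h1, h2]
  set gb : ℝ := ∑ l, p l * ∑ ω, μ l ω * F l ω with hgb
  set eB2 : ℝ := ∑ l, p l * ((Ns : ℝ) * (∑ ω, μ l ω * (F l ω) ^ 2)
      + ((Ns : ℝ) ^ 2 - (Ns : ℝ)) * (∑ ω, μ l ω * F l ω) ^ 2) with heB2
  have key : t ^ 2 * ((M : ℝ) * eB2 + ((M : ℝ) ^ 2 - (M : ℝ)) * ((Ns : ℝ) * gb) ^ 2)
      - (t * ((M : ℝ) * ((Ns : ℝ) * gb))) ^ 2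
      = t ^ 2 * (M : ℝ) * eB2 - t ^ 2 * (M : ℝ) * ((Ns : ℝ) * gb) ^ 2 := by ring
  rw [key]
  have hB2le : eB2 ≤ (Ns : ℝ) * V + ((Ns : ℝ) ^ 2 - (Ns : ℝ)) * b := by
    calc eB2 ≤ ∑ l, p l * ((Ns : ℝ) * V + ((Ns : ℝ) ^ 2 - (Ns : ℝ)) * b) := by
          refine Finset.sum_le_sum fun l _ => ?_
          refine mul_le_mul_of_nonneg_left ?_ (hp0 l)
          have hNs1 : (1 : ℝ) ≤ (Ns : ℝ) := by exact_mod_cast hNs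
          have hNN : (0 : ℝ) ≤ (Ns : ℝ) ^ 2 - (Ns : ℝ) := by nlinarith
          have := hW l
          have := hG l
          nlinarith
      _ = (Ns : ℝ) * V + ((Ns : ℝ) ^ 2 - (Ns : ℝ)) * b := by
          rw [← Finset.sum_mul, hp1, one_mul]
  calc t ^ 2 * (M : ℝ) * eB2 - t ^ 2 * (M : ℝ) * ((Ns : ℝ) * gb) ^ 2
      ≤ t ^ 2 * (M : ℝ) * ((Ns : ℝ) * V + ((Ns : ℝ) ^ 2 - (Ns : ℝ)) * b) - 0 := by
        have h0 : 0 ≤ t ^ 2 * (M : ℝ) := by positivity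
        have := mul_le_mul_of_nonneg_left hB2le h0
        have hnn : 0 ≤ t ^ 2 * (M : ℝ) * ((Ns : ℝ) * gb) ^ 2 := by positivity
        linarith
    _ = t * (V + ((Ns : ℝ) - 1) * b) := by
        rw [ht]
        field_simp
        ring

end Var

/-- **Fixed-budget variance bound for local Pauli observables**: if
`Σ_ω μ_l(ω) (Tr(O ρ̂_l(ω)))² ≤ 3^q` and `|Tr(O Φ_l(ρ))| ≤ 1` for every multi-index `l`,
then with total budget `N_total = M·N_s` the variance of the overall estimator satisfies
`Var[⟨Ô⟩] ≤ (Γ²/N_total) (3^q − 1 + N_s)`. -/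
theorem fixed_budget_variance_bound_local_pauli
    (n K D : ℕ) (hn : 1 ≤ n) (hD : 1 ≤ D)
    (a : Fin K → Fin D → ℝ)
    (Φ : Fin K → Fin D → (Matrix (Fin n) (Fin n) ℂ →ₗ[ℂ] Matrix (Fin n) (Fin n) ℂ))
    (hγ : ∀ k, 0 < ∑ d, |a k d|)
    (ρ : Matrix (Fin n) (Fin n) ℂ)
    (O : Matrix (Fin n) (Fin n) ℂ) (hO : O.IsHermitian)
    (Ω : (Fin K → Fin D) → Type) [∀ l, Fintype (Ω l)]
    (μ : ∀ l, Ω l → ℝ)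
    (hμ0 : ∀ l ω, 0 ≤ μ l ω) (hμ1 : ∀ l, ∑ ω, μ l ω = 1)
    (ρhat : ∀ l, Ω l → Matrix (Fin n) (Fin n) ℂ)
    (hherm : ∀ l ω, (ρhat l ω).IsHermitian)
    (hsnap : ∀ l, ∑ ω, μ l ω • ρhat l ω = compSeq (fun k => Φ k (l k)) ρ)
    (q : ℕ)
    (hB' : ∀ l : Fin K → Fin D,
      ∑ ω, μ l ω * (((O * ρhat l ω).trace).re) ^ 2 ≤ (3 : ℝ) ^ q)
    (hb' : ∀ l : Fin K → Fin D,
      ‖(O * compSeq (fun k => Φ k (l k)) ρ).trace‖ ≤ 1)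
    (M Ns : ℕ) (hM : 1 ≤ M) (hNs : 1 ≤ Ns) :
    (∑ L : Fin M → (Fin K → Fin D),
        ∑ w : (m : Fin M) → Fin Ns → Ω (L m),
          ((∏ m, ∏ k, |a k (L m k)| / (∑ d, |a k d|)) *
              (∏ m, ∏ s, μ (L m) (w m s))) *
            ((1 / ((M : ℝ) * (Ns : ℝ))) *
              ∑ m, ∑ s,
                ((∏ k, (∑ d, |a k d|)) * ∏ k, Real.sign (a k (L m k))) *
                  ((O * ρhat (L m) (w m s)).trace).re) ^ 2)
      - (∑ L : Fin M → (Fin K → Fin D),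
          ∑ w : (m : Fin M) → Fin Ns → Ω (L m),
            ((∏ m, ∏ k, |a k (L m k)| / (∑ d, |a k d|)) *
                (∏ m, ∏ s, μ (L m) (w m s))) *
              ((1 / ((M : ℝ) * (Ns : ℝ))) *
                ∑ m, ∑ s,
                  ((∏ k, (∑ d, |a k d|)) * ∏ k, Real.sign (a k (L m k))) *
                    ((O * ρhat (L m) (w m s)).trace).re)) ^ 2
      ≤ ((∏ k, (∑ d, |a k d|)) ^ 2 / ((M : ℝ) * (Ns : ℝ))) *
          ((3 : ℝ) ^ q - 1 + (Ns : ℝ)) := by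
  set Γ : ℝ := ∏ k, (∑ d, |a k d|) with hΓdef
  have hΓpos : 0 < Γ := Finset.prod_pos fun k _ => hγ k
  -- probability facts
  set p : (Fin K → Fin D) → ℝ := fun l => ∏ k, |a k (l k)| / (∑ d, |a k d|) with hpdef
  have hp0 : ∀ l, 0 ≤ p l := fun l =>
    Finset.prod_nonneg fun k _ => div_nonneg (abs_nonneg _) (hγ k).le
  have hp1 : ∑ l, p l = 1 := by
    rw [hpdef, sum_pi_prod (h := fun k d => |a k d| / (∑ d', |a k d'|))]
    refine Finset.prod_eq_one fun k _ => ?_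
    rw [← Finset.sum_div, div_self (hγ k).ne']
  -- the signed coefficient
  set c : (Fin K → Fin D) → ℝ := fun l => Γ * ∏ k, Real.sign (a k (l k)) with hcdef
  have hc2 : ∀ l, (c l) ^ 2 ≤ Γ ^ 2 := by
    intro l
    have habs : |∏ k, Real.sign (a k (l k))| ≤ 1 := by
      rw [Finset.abs_prod]
      refine Finset.prod_le_one (fun k _ => abs_nonneg _) fun k _ => ?_
      rcases Real.sign_apply_eq (a k (l k)) with h | h | h <;> simp [h]
    have h2 : (∏ k, Real.sign (a k (l k))) ^ 2 ≤ 1 := by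
      rw [← sq_abs]; nlinarith [abs_nonneg (∏ k, Real.sign (a k (l k)))]
    rw [hcdef]
    simp only [mul_pow]
    nlinarith [sq_nonneg Γ]
  -- the estimator function
  set F : ∀ l : Fin K → Fin D, Ω l → ℝ :=
    fun l ω => c l * ((O * ρhat l ω).trace).re with hFdef
  -- unbiasedness
  have hub : ∀ l, ∑ ω, μ l ω * ((O * ρhat l ω).trace).re
      = ((O * compSeq (fun k => Φ k (l k)) ρ).trace).re := by
    intro l
    have h := congrArg (fun X : Matrix (Fin n) (Fin n) ℂ => ((O * X).trace).re) (hsnap l)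
    simpa [Finset.mul_sum, Matrix.trace_sum, Complex.re_sum, mul_smul_comm,
      Matrix.trace_smul, Complex.real_smul] using h
  have hgle : ∀ l : Fin K → Fin D,
      |((O * compSeq (fun k => Φ k (l k)) ρ).trace).re| ≤ 1 := by
    intro l
    exact (Complex.abs_re_le_norm _).trans (hb' l)
  -- moment bounds
  have hsumnn : ∀ l, 0 ≤ ∑ ω, μ l ω * (((O * ρhat l ω).trace).re) ^ 2 := fun l =>
    Finset.sum_nonneg fun ω _ => mul_nonneg (hμ0 l ω) (sq_nonneg _)
  have hW : ∀ l, ∑ ω, μ l ω * (F l ω) ^ 2 ≤ Γ ^ 2 * (3 : ℝ) ^ q := by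
    intro l
    have e : ∑ ω, μ l ω * (F l ω) ^ 2
        = (c l) ^ 2 * ∑ ω, μ l ω * (((O * ρhat l ω).trace).re) ^ 2 := by
      rw [Finset.mul_sum]
      exact Finset.sum_congr rfl fun ω _ => by rw [hFdef]; ring
    rw [e]
    exact mul_le_mul (hc2 l) (hB' l) (hsumnn l) (sq_nonneg Γ)
  have hG : ∀ l, (∑ ω, μ l ω * F l ω) ^ 2 ≤ Γ ^ 2 := by
    intro l
    have e : ∑ ω, μ l ω * F l ω = c l * ((O * compSeq (fun k => Φ k (l k)) ρ).trace).re := by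
      rw [← hub l, Finset.mul_sum]
      exact Finset.sum_congr rfl fun ω _ => by rw [hFdef]; ring
    rw [e, mul_pow]
    have h1 : (((O * compSeq (fun k => Φ k (l k)) ρ).trace).re) ^ 2 ≤ 1 := by
      rw [← sq_abs]; nlinarith [hgle l, abs_nonneg ((O * compSeq (fun k => Φ k (l k)) ρ).trace).re]
    nlinarith [sq_nonneg (c l), hc2 l, sq_nonneg Γ]
  have key := var_le p hp0 hp1 μ hμ1 F M Ns hM hNs
    (Γ ^ 2 * (3 : ℝ) ^ q) (Γ ^ 2)
    (by positivity) (sq_nonneg Γ) hW hG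
  refine le_trans key (le_of_eq ?_)
  have hMpos : (0 : ℝ) < M := by exact_mod_cast hM
  have hNspos : (0 : ℝ) < Ns := by exact_mod_cast hNs
  field_simp
  ring
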